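/- arXiv:2407.06827 — 5 statements merged into one kernel-verified Lean document; each statement's English description precedes it below -/
import Mathlib

section
/- Let σ : ℝ → ℝ be nondecreasing and continuous with σ(u) = 0 for u ≤ 0. Suppose there are constants d > 0 and L > 0 such that (a) for all 0 < u ≤ v ≤ d we have 0 < σ(v)/v ≤ σ(u)/u, and (b) |σ(u)| ≤ L|u| and |σ(u) − σ(v)| ≤ L|u−v| for all u, v ≥ d. Then for every δ ∈ (0, d) and all u, v ∈ ℝ, |σ(u) − σ(v)| ≤ (max(L, σ(δ)/δ))·|u−v| + σ(δ). -/
theorem stmt_0 (σ : ℝ → ℝ) (hmono : Monotone σ) (hcont : Continuous σ)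
    (hzero : ∀ u : ℝ, u ≤ 0 → σ u = 0)
    (d L : ℝ) (hd : 0 < d) (hL : 0 < L)
    (ha : ∀ u v : ℝ, 0 < u → u ≤ v → v ≤ d → 0 < σ v / v ∧ σ v / v ≤ σ u / u)
    (hb1 : ∀ u : ℝ, d ≤ u → |σ u| ≤ L * |u|)
    (hb2 : ∀ u v : ℝ, d ≤ u → d ≤ v → |σ u - σ v| ≤ L * |u - v|)
    (δ : ℝ) (hδ0 : 0 < δ) (hδd : δ < d) :
    ∀ u v : ℝ, |σ u - σ v| ≤ max L (σ δ / δ) * |u - v| + σ δ := by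
  have hσ0 : σ 0 = 0 := hzero 0 le_rfl
  have hnn : ∀ u : ℝ, 0 ≤ σ u := fun u => by
    rcases le_or_gt u 0 with h | h
    · exact (hzero u h).ge
    · exact hσ0 ▸ hmono h.le
  set K := max L (σ δ / δ) with hK
  have hK0 : 0 ≤ K := le_trans hL.le (le_max_left _ _)
  have ratio : ∀ u v : ℝ, δ ≤ u → u ≤ v → v ≤ d →
      σ v - σ u ≤ (σ δ / δ) * (v - u) := by
    intro u v hu huv hvd
    have hu0 : 0 < u := lt_of_lt_of_le hδ0 hu
    have hv0 : 0 < v := lt_of_lt_of_le hu0 huv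
    have h1 := (ha u v hu0 huv hvd).2
    have h2 := (ha δ u hδ0 hu (huv.trans hvd)).2
    have hσv : σ v ≤ (σ u / u) * v := by
      have := mul_le_mul_of_nonneg_right h1 hv0.le
      rwa [div_mul_cancel₀ _ hv0.ne'] at this
    have hσu : σ u = (σ u / u) * u := (div_mul_cancel₀ _ hu0.ne').symm
    calc σ v - σ u ≤ (σ u / u) * v - (σ u / u) * u := by rw [← hσu]; linarith
      _ = (σ u / u) * (v - u) := by ring
      _ ≤ (σ δ / δ) * (v - u) := mul_le_mul_of_nonneg_right h2 (by linarith)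
  have lip : ∀ u v : ℝ, δ ≤ u → u ≤ v → σ v - σ u ≤ K * (v - u) := by
    intro u v hu huv
    rcases le_or_gt v d with hvd | hdv
    · calc σ v - σ u ≤ (σ δ / δ) * (v - u) := ratio u v hu huv hvd
        _ ≤ K * (v - u) := mul_le_mul_of_nonneg_right (le_max_right _ _) (by linarith)
    · rcases le_or_gt d u with hdu | hud
      · have h := hb2 v u hdv.le hdu
        have h2 : σ v - σ u ≤ L * (v - u) := by
          have h' := le_trans (le_abs_self _) h
          rwa [abs_of_nonneg (by linarith : (0:ℝ) ≤ v - u)] at h'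
        calc σ v - σ u ≤ L * (v - u) := h2
          _ ≤ K * (v - u) := mul_le_mul_of_nonneg_right (le_max_left _ _) (by linarith)
      · have h1 : σ d - σ u ≤ (σ δ / δ) * (d - u) := ratio u d hu hud.le le_rfl
        have h2 : σ v - σ d ≤ L * (v - d) := by
          have h := hb2 v d hdv.le le_rfl
          have h' := le_trans (le_abs_self _) h
          rwa [abs_of_nonneg (by linarith : (0:ℝ) ≤ v - d)] at h'
        have hA : (σ δ / δ) * (d - u) ≤ K * (d - u) :=
          mul_le_mul_of_nonneg_right (le_max_right _ _) (by linarith)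
        have hB : L * (v - d) ≤ K * (v - d) :=
          mul_le_mul_of_nonneg_right (le_max_left _ _) (by linarith)
        nlinarith
  have main : ∀ u v : ℝ, u ≤ v → σ v - σ u ≤ K * (v - u) + σ δ := by
    intro u v huv
    have h1 : σ v ≤ σ (max v δ) := hmono (le_max_left _ _)
    have h2 : σ (max u δ) ≤ σ u + σ δ := by
      rcases le_total u δ with h | h
      · rw [max_eq_right h]; linarith [hnn u]
      · rw [max_eq_left h]; linarith [hnn δ]
    have h3 := lip (max u δ) (max v δ) (le_max_right _ _) (max_le_max huv le_rfl)
    have h4 : max v δ - max u δ ≤ v - u := by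
      rcases le_total u δ with h | h <;> rcases le_total v δ with h' | h' <;>
        simp only [max_eq_left, max_eq_right, *] <;> linarith
    have h5 : K * (max v δ - max u δ) ≤ K * (v - u) := mul_le_mul_of_nonneg_left h4 hK0
    linarith
  intro u v
  rcases le_total u v with h | h
  · rw [abs_sub_comm (σ u) (σ v), abs_sub_comm u v,
      abs_of_nonneg (by linarith [hmono h] : (0:ℝ) ≤ σ v - σ u),
      abs_of_nonneg (by linarith : (0:ℝ) ≤ v - u)]
    exact main u v h
  · rw [abs_of_nonneg (by linarith [hmono h] : (0:ℝ) ≤ σ u - σ v),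
      abs_of_nonneg (by linarith : (0:ℝ) ≤ u - v)]
    exact main v u h
end

section
/- Let σ : ℝ → ℝ be nondecreasing and continuous with σ(u) = 0 for u ≤ 0. Suppose there are constants d > 0 and L > 0 such that (a) for all 0 < u ≤ v ≤ d we have 0 < σ(v)/v ≤ σ(u)/u, and (b) |σ(u)| ≤ L|u| and |σ(u) − σ(v)| ≤ L|u−v| for all u, v ≥ d. Then for all u, v ∈ ℝ, |σ(u) − σ(v)| ≤ L|u−v| + σ(|u−v|). -/
theorem stmt_1 (σ : ℝ → ℝ) (hmono : Monotone σ) (hcont : Continuous σ)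
    (hzero : ∀ u : ℝ, u ≤ 0 → σ u = 0)
    (d L : ℝ) (hd : 0 < d) (hL : 0 < L)
    (ha : ∀ u v : ℝ, 0 < u → u ≤ v → v ≤ d → 0 < σ v / v ∧ σ v / v ≤ σ u / u)
    (hb1 : ∀ u : ℝ, d ≤ u → |σ u| ≤ L * |u|)
    (hb2 : ∀ u v : ℝ, d ≤ u → d ≤ v → |σ u - σ v| ≤ L * |u - v|) :
    ∀ u v : ℝ, |σ u - σ v| ≤ L * |u - v| + σ |u - v| := by
  have hσ0 : σ 0 = 0 := hzero 0 le_rfl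
  have hnn : ∀ t : ℝ, 0 ≤ σ t := by
    intro t
    rcases le_or_gt t 0 with h | h
    · rw [hzero t h]
    · rw [← hσ0]; exact hmono h.le
  have hsub : ∀ v u : ℝ, 0 < v → v < u → u ≤ d → σ u ≤ σ v + σ (u - v) := by
    intro v u hv hvu hud
    have hw : 0 < u - v := by linarith
    have hu : 0 < u := hv.trans hvu
    obtain ⟨_, h1⟩ := ha v u hv hvu.le hud
    obtain ⟨_, h2⟩ := ha (u - v) u hw (by linarith) hud
    have e1 : σ u / u * v ≤ σ v := by
      have := mul_le_mul_of_nonneg_right h1 hv.le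
      rwa [div_mul_cancel₀ _ (ne_of_gt hv)] at this
    have e2 : σ u / u * (u - v) ≤ σ (u - v) := by
      have := mul_le_mul_of_nonneg_right h2 hw.le
      rwa [div_mul_cancel₀ _ (ne_of_gt hw)] at this
    have e3 : σ u / u * v + σ u / u * (u - v) = σ u := by
      field_simp; ring
    linarith
  have key : ∀ v u : ℝ, v ≤ u → σ u - σ v ≤ L * (u - v) + σ (u - v) := by
    intro v u hvu
    have hw : 0 ≤ u - v := by linarith
    have hLw : 0 ≤ L * (u - v) := mul_nonneg hL.le hw
    rcases le_or_gt u 0 with hu0 | hu0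
    · rw [hzero u hu0, hzero v (by linarith)]
      have := hnn (u - v); linarith
    rcases le_or_gt v 0 with hv0 | hv0
    · rw [hzero v hv0]
      have : σ u ≤ σ (u - v) := hmono (by linarith)
      linarith
    rcases eq_or_lt_of_le hvu with rfl | hvu'
    · simp [hσ0]
    rcases le_or_gt u d with hud | hud
    · have := hsub v u hv0 hvu' hud; linarith
    rcases le_or_gt d v with hdv | hdv
    · have h := hb2 u v hud.le hdv
      rw [abs_of_nonneg hw] at h
      have := hnn (u - v)
      linarith [le_abs_self (σ u - σ v)]
    · have h1 : σ u - σ d ≤ L * (u - d) := by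
        have h := hb2 u d hud.le le_rfl
        rw [abs_of_nonneg (by linarith : (0:ℝ) ≤ u - d)] at h
        linarith [le_abs_self (σ u - σ d)]
      have h2 : σ d ≤ σ v + σ (d - v) := hsub v d hv0 hdv le_rfl
      have h3 : σ (d - v) ≤ σ (u - v) := hmono (by linarith)
      have h4 : L * (u - d) ≤ L * (u - v) := by nlinarith
      linarith
  intro u v
  rcases le_total v u with h | h
  · rw [abs_of_nonneg (by linarith : (0:ℝ) ≤ u - v),
      abs_of_nonneg (sub_nonneg.mpr (hmono h))]
    exact key v u h
  · rw [abs_sub_comm, abs_sub_comm u v,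
      abs_of_nonneg (sub_nonneg.mpr (hmono h)),
      abs_of_nonneg (by linarith : (0:ℝ) ≤ v - u)]
    exact key u v h
end

section
/- Let σ : (0,1] → (0,∞) satisfy the monotonicity condition that u ↦ σ(u)/u is nonincreasing on (0,1], and for δ ∈ (0,1) define σ^{(m)}(u) := σ(u) for u ≥ 1/m and σ^{(m)}(u) := m·σ(1/m)·u for 0 ≤ u < 1/m (extended by 0 for u ≤ 0). Then for all sufficiently large m and all u ∈ ℝ, |σ^{(m)}(u) − σ^{(m−1)}(u)| ≤ 2·m^{−1}·σ(1/(m−1)). -/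
/-- The Lipschitz truncation `σ^{(m)}` of `σ`: equal to `σ u` for `u ≥ 1/m`,
linear `m·σ(1/m)·u` on `[0, 1/m)`, and `0` for `u ≤ 0`. -/
noncomputable def sigmaTrunc (σ : ℝ → ℝ) (m : ℕ) (u : ℝ) : ℝ :=
  if u ≤ 0 then 0 else if (1 : ℝ) / m ≤ u then σ u else (m : ℝ) * σ (1 / m) * u

theorem stmt_2 (σ : ℝ → ℝ) (hmono : Monotone σ) (hcont : Continuous σ)
    (hzero : ∀ u : ℝ, u ≤ 0 → σ u = 0)
    (hpos : ∀ u : ℝ, 0 < u → u ≤ 1 → 0 < σ u)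
    (hratio : ∀ u v : ℝ, 0 < u → u ≤ v → v ≤ 1 → σ v / v ≤ σ u / u) :
    ∃ m₀ : ℕ, ∀ m : ℕ, m₀ ≤ m → ∀ u : ℝ,
      |sigmaTrunc σ m u - sigmaTrunc σ (m - 1) u|
        ≤ 2 * (m : ℝ)⁻¹ * σ (1 / ((m : ℝ) - 1)) := by
  refine ⟨2, fun m hm u => ?_⟩
  have hm1 : 1 ≤ m := le_trans one_le_two hm
  have hm2 : (2:ℝ) ≤ (m:ℝ) := by exact_mod_cast hm
  have hmpos : (0:ℝ) < m := by linarith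
  have hcast : ((m - 1 : ℕ) : ℝ) = (m:ℝ) - 1 := by
    rw [Nat.cast_sub hm1, Nat.cast_one]
  have hMpos : (0:ℝ) < (m:ℝ) - 1 := by linarith
  set s := σ (1 / ((m:ℝ) - 1)) with hs
  have h1m_pos : (0:ℝ) < 1 / m := by positivity
  have h1M_pos : (0:ℝ) < 1 / ((m:ℝ)-1) := by positivity
  have h1m_le : (1:ℝ)/m ≤ 1/((m:ℝ)-1) := by
    apply one_div_le_one_div_of_le hMpos; linarith
  have h1M_le1 : 1/((m:ℝ)-1) ≤ 1 := by
    rw [div_le_one hMpos]; linarith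
  have h1m_le1 : (1:ℝ)/m ≤ 1 := le_trans h1m_le h1M_le1
  have hspos : 0 < s := hpos _ h1M_pos h1M_le1
  have hsm_pos : 0 < σ (1/(m:ℝ)) := hpos _ h1m_pos h1m_le1
  have hA : ((m:ℝ)-1) * s ≤ (m:ℝ) * σ (1/(m:ℝ)) := by
    have hr := hratio (1/(m:ℝ)) (1/((m:ℝ)-1)) h1m_pos h1m_le h1M_le1
    rw [div_le_div_iff₀ h1M_pos h1m_pos, mul_one_div, mul_one_div,
      div_le_div_iff₀ hmpos hMpos] at hr
    nlinarith [hr]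
  have hB : σ (1/(m:ℝ)) ≤ s := hmono h1m_le
  have hrw : 2 * (m:ℝ)⁻¹ * s = 2 * s / (m:ℝ) := by ring
  simp only [sigmaTrunc, hcast]
  rcases le_or_gt u 0 with hu | hu
  · rw [if_pos hu, if_pos hu]
    simp only [sub_zero, abs_zero]
    positivity
  · rw [if_neg (not_le.mpr hu), if_neg (not_le.mpr hu)]
    rcases le_or_gt (1/((m:ℝ)-1)) u with h2 | h2
    · rw [if_pos (le_trans h1m_le h2), if_pos h2]
      simp only [sub_self, abs_zero]
      positivity
    · rw [if_neg (not_le.mpr h2)]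
      have hu1 : ((m:ℝ)-1) * u ≤ 1 := by
        rw [lt_div_iff₀ hMpos] at h2; nlinarith [h2.le]
      rcases le_or_gt (1/(m:ℝ)) u with h3 | h3
      · rw [if_pos h3]
        have hum : (1:ℝ) ≤ u * m := by
          rw [div_le_iff₀ hmpos] at h3; linarith
        have hfu : σ u ≤ s := hmono h2.le
        have hfl : σ (1/(m:ℝ)) ≤ σ u := hmono h3
        have hfl2 : ((m:ℝ)-1) * s ≤ (m:ℝ) * σ u := by nlinarith
        have hgl' : ((m:ℝ)-1) * s ≤ ((m:ℝ)-1) * s * (u * m) := by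
          nlinarith [mul_le_mul_of_nonneg_left hum
            (mul_nonneg (le_of_lt hMpos) hspos.le)]
        have hgu : ((m:ℝ)-1) * s * u * m ≤ s * m := by
          nlinarith [mul_le_mul_of_nonneg_right hu1 (mul_pos hspos hmpos).le]
        have hfum : σ u * m ≤ s * m := mul_le_mul_of_nonneg_right hfu hmpos.le
        rw [hrw, abs_le, ← neg_div]
        constructor
        · rw [div_le_iff₀ hmpos]; linarith [hfl2, hgu, hgl', hfum, hspos]
        · rw [le_div_iff₀ hmpos]; linarith [hfl2, hgu, hgl', hfum, hspos]
      · rw [if_neg (not_le.mpr h3)]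
        have hum : u * m ≤ 1 := by
          rw [lt_div_iff₀ hmpos] at h3; linarith
        have hd1 : (m:ℝ) * σ (1/(m:ℝ)) - ((m:ℝ)-1) * s ≤ s := by
          linarith [mul_le_mul_of_nonneg_left hB hmpos.le]
        have hd0 : 0 ≤ (m:ℝ) * σ (1/(m:ℝ)) - ((m:ℝ)-1) * s := by linarith
        have hun : 0 ≤ u * m := by positivity
        rw [hrw, abs_le, ← neg_div]
        constructor
        · rw [div_le_iff₀ hmpos]; linarith [mul_nonneg hd0 hun, hspos]
        · rw [le_div_iff₀ hmpos]; linarith [mul_le_mul hd1 hum hun hspos.le, hspos]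
end

section
/- Suppose σ : (0,∞) → (0,∞) satisfies: there exist α ∈ (0, 1/4) and k₁ > 0 such that e^{−k}/σ(e^{−k}) ≥ k^{−α} for all k ≥ k₁. Then for every constant c > 0, there exists m₁ ≥ 1 such that for all m ≥ m₁, m^{−1}·σ(1/(m−1)) · exp( c·m⁴·σ(1/m)⁴ ) ≤ m^{−3/2}. -/
/-! With `k = log x`, the growth condition reads `σ (1/x) ≤ (log x) ^ α / x` for large `x`.
So with `t = log m` the left-hand side is at most `m⁻² · 2 t ^ α · exp (c t ^ (4α))`, using
`m - 1 ≥ m / 2`. Since `4α < 1`, the logarithm `log 2 + α log t + c t ^ (4α)` of the middle factor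
is `o(t)`, hence eventually at most `t / 2`, and the bound becomes `m⁻² · m ^ (1/2) = m ^ (-3/2)`. -/

open Real Filter Asymptotics

theorem isLittleO_rpow_id_atTop {r : ℝ} (hr : r < 1) : (fun t : ℝ => t ^ r) =o[atTop] id := by
  refine (isLittleO_iff_tendsto' ?_).2 ?_
  · filter_upwards [eventually_ne_atTop 0] with t ht h
    exact absurd h ht
  · refine (tendsto_rpow_neg_atTop (sub_pos.2 hr)).congr' ?_
    filter_upwards [eventually_ne_atTop 0] with t ht
    rw [neg_sub, rpow_sub_one ht, id]

theorem eventually_two_mul_rpow_mul_exp_le (c : ℝ) {α : ℝ} (hα : α < 1 / 4) :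
    ∀ᶠ t in atTop, 2 * t ^ α * exp (c * (t ^ α) ^ 4) ≤ exp (t / 2) := by
  have hlittle : (fun t => log 2 + α * log t + c * t ^ (4 * α)) =o[atTop] id :=
    ((isLittleO_const_id_atTop _).add (isLittleO_log_id_atTop.const_mul_left α)).add
      ((isLittleO_rpow_id_atTop (by linarith)).const_mul_left c)
  filter_upwards [hlittle.bound (by norm_num : (0 : ℝ) < 1 / 2), eventually_gt_atTop 0]
    with t hbound ht
  have hpow : (t ^ α) ^ 4 = t ^ (4 * α) := by
    rw [← rpow_natCast, ← rpow_mul ht.le, mul_comm]; norm_num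
  calc 2 * t ^ α * exp (c * (t ^ α) ^ 4)
      = exp (log 2 + α * log t + c * t ^ (4 * α)) := by
        rw [hpow, exp_add, exp_add, exp_log two_pos, rpow_def_of_pos ht, mul_comm α]
    _ ≤ exp (t / 2) := by
        rw [exp_le_exp]
        rw [norm_eq_abs, norm_eq_abs, id, abs_of_pos ht] at hbound
        linarith [le_abs_self (log 2 + α * log t + c * t ^ (4 * α))]

theorem le_log_rpow_div_of_growth {σ : ℝ → ℝ} {α k₁ : ℝ}
    (hpos : ∀ x : ℝ, 0 < x → 0 < σ x)
    (hgrowth : ∀ k : ℝ, k₁ ≤ k → k ^ (-α) ≤ exp (-k) / σ (exp (-k)))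
    {x : ℝ} (hx : 1 < x) (hk : k₁ ≤ log x) : σ x⁻¹ ≤ log x ^ α / x := by
  have hx0 : 0 < x := by linarith
  have hlog : 0 < log x := log_pos hx
  have hexp : exp (-log x) = x⁻¹ := by rw [exp_neg, exp_log hx0]
  have h := hgrowth _ hk
  rw [hexp, le_div_iff₀ (hpos _ (inv_pos.2 hx0)), rpow_neg hlog.le] at h
  rwa [inv_mul_le_iff₀ (rpow_pos_of_pos hlog α), ← div_eq_mul_inv] at h

theorem inv_mul_mul_exp_le_rpow {m L s s' c : ℝ} (hm : 2 ≤ m) (hc : 0 ≤ c)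
    (hs : s ≤ L / (m - 1)) (hs'_nonneg : 0 ≤ s') (hs' : m * s' ≤ L)
    (hL : 2 * L * exp (c * L ^ 4) ≤ exp (log m / 2)) :
    m⁻¹ * s * exp (c * m ^ 4 * s' ^ 4) ≤ m ^ (-(3 : ℝ) / 2) := by
  have hm0 : 0 < m := by linarith
  have hL0 : 0 ≤ L := (mul_nonneg hm0.le hs'_nonneg).trans hs'
  have hpow : m ^ (-(3 : ℝ) / 2) = exp (log m / 2) / m ^ 2 := by
    rw [eq_div_iff (by positivity), rpow_def_of_pos hm0, ← exp_log hm0, ← exp_nat_mul, ← exp_add,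
      log_exp]
    ring_nf
  calc m⁻¹ * s * exp (c * m ^ 4 * s' ^ 4)
      ≤ m⁻¹ * (L / (m - 1)) * exp (c * L ^ 4) := by
        rw [mul_assoc c, ← mul_pow]
        have : 0 ≤ L / (m - 1) := div_nonneg hL0 (by linarith)
        gcongr
    _ ≤ m⁻¹ * (2 * L / m) * exp (c * L ^ 4) := by
        gcongr m⁻¹ * ?_ * _
        rw [div_le_div_iff₀ (by linarith) hm0]
        nlinarith
    _ = 2 * L * exp (c * L ^ 4) / m ^ 2 := by field_simp
    _ ≤ m ^ (-(3 : ℝ) / 2) := by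
        rw [hpow]
        gcongr

theorem stmt_3_general (σ : ℝ → ℝ) (hpos : ∀ x : ℝ, 0 < x → 0 < σ x)
    (α k₁ : ℝ) (hα0 : 0 < α) (hα : α < 1/4)
    (hgrowth : ∀ k : ℝ, k₁ ≤ k → k ^ (-α) ≤ Real.exp (-k) / σ (Real.exp (-k))) :
    ∀ c : ℝ, 0 < c → ∃ m₁ : ℕ, 1 ≤ m₁ ∧ ∀ m : ℕ, m₁ ≤ m →
      (m : ℝ)⁻¹ * σ (1 / ((m : ℝ) - 1)) * Real.exp (c * (m : ℝ)^4 * (σ (1 / (m : ℝ)))^4)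
        ≤ (m : ℝ) ^ (-(3 : ℝ)/2) := by
  intro c hc
  have hbound : ∀ᶠ m : ℕ in atTop, (m : ℝ)⁻¹ * σ (1 / ((m : ℝ) - 1)) *
      exp (c * (m : ℝ) ^ 4 * σ (1 / (m : ℝ)) ^ 4) ≤ (m : ℝ) ^ (-(3 : ℝ) / 2) := by
    filter_upwards [eventually_ge_atTop 3,
      tendsto_natCast_atTop_atTop.eventually_ge_atTop (exp k₁ + 1),
      (tendsto_log_atTop.comp tendsto_natCast_atTop_atTop).eventually
        (eventually_two_mul_rpow_mul_exp_le c hα)] with m hm3 hmk hkey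
    have hm3' : (3 : ℝ) ≤ m := by exact_mod_cast hm3
    have hk : k₁ ≤ log ((m : ℝ) - 1) := (le_log_iff_exp_le (by linarith)).2 (by linarith)
    have hlog_mono : log ((m : ℝ) - 1) ≤ log m := log_le_log (by linarith) (by linarith)
    rw [one_div, one_div]
    refine inv_mul_mul_exp_le_rpow (by linarith) hc.le ?_ (hpos _ (by positivity)).le ?_ hkey
    · calc σ ((m : ℝ) - 1)⁻¹ ≤ log ((m : ℝ) - 1) ^ α / ((m : ℝ) - 1) :=
            le_log_rpow_div_of_growth hpos hgrowth (x := (m : ℝ) - 1) (by linarith) hk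
        _ ≤ log m ^ α / ((m : ℝ) - 1) := by
            have : (0 : ℝ) ≤ log ((m : ℝ) - 1) := log_nonneg (by linarith)
            gcongr
            linarith
    · have h := le_log_rpow_div_of_growth hpos hgrowth (x := m) (by linarith) (hk.trans hlog_mono)
      rwa [le_div_iff₀ (by positivity), mul_comm] at h
  obtain ⟨m₁, hm₁⟩ := eventually_atTop.1 hbound
  exact ⟨max m₁ 1, le_max_right _ _, fun m hm => hm₁ m (le_of_max_le_left hm)⟩

theorem stmt_3 (σ : ℝ → ℝ) (hpos : ∀ x : ℝ, 0 < x → 0 < σ x)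
    (α k₁ : ℝ) (hα0 : 0 < α) (hα : α < 1/4) (hk₁ : 0 < k₁)
    (hgrowth : ∀ k : ℝ, k₁ ≤ k → k ^ (-α) ≤ Real.exp (-k) / σ (Real.exp (-k))) :
    ∀ c : ℝ, 0 < c → ∃ m₁ : ℕ, 1 ≤ m₁ ∧ ∀ m : ℕ, m₁ ≤ m →
      (m : ℝ)⁻¹ * σ (1 / ((m : ℝ) - 1)) * Real.exp (c * (m : ℝ)^4 * (σ (1 / (m : ℝ)))^4)
        ≤ (m : ℝ) ^ (-(3 : ℝ)/2) :=
  stmt_3_general σ hpos α k₁ hα0 hα hgrowth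
end

section
/- Let α > 5/2 and set λ = γ/(1+γ) for some γ ∈ (0, 1/4), with p_k := e^{−(k+m)/λ} for integers k ≥ 0 and m ≥ 1. Suppose σ : (0,1) → (0,∞) satisfies e^{−k}/σ(e^{−k}) ≤ k^{−α} for all k ≥ k₀. Then there exists c = c(α) > 0 and k₀' (independent of m) such that for all k ≥ k₀', p_{k−1}^{1+λ} / (p_k · σ(p_{k−1}^λ)) ≤ e^{1/λ} / (k − 1 + m)^{5/2 + c}. -/
theorem stmt_10 (σ : ℝ → ℝ) (hσpos : ∀ x : ℝ, 0 < x → x < 1 → 0 < σ x)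
    (α γ : ℝ) (hα : 5/2 < α) (hγ0 : 0 < γ) (hγ : γ < 1/4)
    (k₀ : ℕ)
    (hgrowth : ∀ k : ℕ, k₀ ≤ k →
      Real.exp (-(k:ℝ)) / σ (Real.exp (-(k:ℝ))) ≤ (k : ℝ) ^ (-α)) :
    ∃ c : ℝ, 0 < c ∧ ∃ k₀' : ℕ, ∀ m : ℕ, 1 ≤ m → ∀ k : ℕ, k₀' ≤ k →
      (Real.exp (-((k:ℝ) - 1 + m) / (γ/(1+γ)))) ^ (1 + γ/(1+γ)) /
          (Real.exp (-((k:ℝ) + m) / (γ/(1+γ)))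
            * σ ((Real.exp (-((k:ℝ) - 1 + m) / (γ/(1+γ)))) ^ (γ/(1+γ))))
        ≤ Real.exp (1/(γ/(1+γ))) / ((k:ℝ) - 1 + m) ^ ((5:ℝ)/2 + c) := by
  refine ⟨α - 5/2, by linarith, k₀ + 1, ?_⟩
  intro m hm k hk
  set L : ℝ := γ/(1+γ) with hLdef
  have h1γ : (0:ℝ) < 1 + γ := by linarith
  have hL : 0 < L := div_pos hγ0 h1γ
  have hk1 : 1 ≤ k := le_trans (Nat.le_add_left 1 k₀) hk
  -- n = k - 1 + m as a natural number
  set n : ℕ := k - 1 + m with hndef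
  have hNcast : ((k:ℝ) - 1 + m) = (n:ℝ) := by
    have : (k - 1 : ℕ) + 1 = k := Nat.succ_pred_eq_of_pos hk1
    push_cast [hndef]
    have : ((k - 1 : ℕ) : ℝ) = (k:ℝ) - 1 := by
      have h := Nat.cast_sub hk1 (R := ℝ)
      simpa using h
    rw [this]
  have hn1 : 1 ≤ n := le_trans hm (Nat.le_add_left m (k - 1))
  have hnk₀ : k₀ ≤ n := by
    have : k₀ ≤ k - 1 := Nat.le_sub_one_of_lt (lt_of_lt_of_le (Nat.lt_succ_self k₀) hk)
    exact le_trans this (Nat.le_add_right _ _)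
  set N : ℝ := (n:ℝ) with hNdef
  have hNpos : (0:ℝ) < N := by rw [hNdef]; exact_mod_cast hn1
  have hk1N : ((k:ℝ) + m) = N + 1 := by
    rw [← hNcast]; ring
  rw [hNcast, hk1N]
  -- simplify σ argument
  have hσarg : (Real.exp (-N / L)) ^ L = Real.exp (-N) := by
    rw [← Real.exp_mul, div_mul_cancel₀ _ (ne_of_gt hL)]
  rw [hσarg]
  have hσp : 0 < σ (Real.exp (-N)) := by
    refine hσpos _ (Real.exp_pos _) ?_
    rw [Real.exp_lt_one_iff]; linarith
  -- simplify the numerator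
  have hnum : (Real.exp (-N / L)) ^ (1 + L)
      = Real.exp (1/L) * (Real.exp (-(N + 1) / L) * Real.exp (-N)) := by
    rw [← Real.exp_mul, ← Real.exp_add, ← Real.exp_add]
    congr 1
    field_simp
    ring
  rw [hnum]
  have hEpos : (0:ℝ) < Real.exp (-(N + 1) / L) := Real.exp_pos _
  have hLHS : Real.exp (1/L) * (Real.exp (-(N + 1) / L) * Real.exp (-N)) /
      (Real.exp (-(N + 1) / L) * σ (Real.exp (-N)))
      = Real.exp (1/L) * (Real.exp (-N) / σ (Real.exp (-N))) := by
    field_simp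
  rw [hLHS]
  have h52 : (5:ℝ)/2 + (α - 5/2) = α := by ring
  rw [h52]
  have hbound := hgrowth n hnk₀
  have hRHS : Real.exp (1/L) / N ^ α = Real.exp (1/L) * N ^ (-α) := by
    rw [Real.rpow_neg hNpos.le]
    rw [div_eq_mul_inv]
  rw [hRHS]
  exact mul_le_mul_of_nonneg_left hbound (Real.exp_pos _).le
end
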